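/- Fix a real number λ ≠ 0. For every integer n ≥ 0 and every real x, the degenerate Bell polynomial satisfies B_{n,λ}(x) = Σ_{m=0}^{n} J_{m,λ}(x) S_{1,λ}(n,m). -/

import Mathlib

open Finset

/-- The degenerate falling factorial `(x)_{n,λ} = x(x−λ)⋯(x−(n−1)λ)`;
for `lam = 1` it is the ordinary falling factorial `(x)_n`. -/
noncomputable def dff (lam : ℝ) (n : ℕ) (x : ℝ) : ℝ :=
  ∏ i ∈ Finset.range n, (x - i * lam)

/-- The degenerate exponential `e_λ^x(t) = Σ_{n≥0} (x)_{n,λ} t^n/n!`. -/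
noncomputable def degExp (lam x : ℝ) : PowerSeries ℝ :=
  PowerSeries.mk fun n => dff lam n x / n.factorial

/-- The degenerate logarithm `log_λ(1+t) = Σ_{n≥1} λ^{n−1}(1)_{n,1/λ} t^n/n!`. -/
noncomputable def degLog (lam : ℝ) : PowerSeries ℝ :=
  PowerSeries.mk fun n =>
    if n = 0 then 0 else lam ^ (n - 1) * dff (1 / lam) n 1 / n.factorial

/-- Composition `f(g(t))` of formal power series (valid definition of composition
when `g` has zero constant term, as in all uses below). -/
noncomputable def pscomp (f g : PowerSeries ℝ) : PowerSeries ℝ :=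
  PowerSeries.mk fun n =>
    ∑ k ∈ Finset.range (n + 1), (PowerSeries.coeff k f) * (PowerSeries.coeff n (g ^ k))


/-!
Put `g = e_λ(t) - 1`. The Jindalrae series is `e_λ^x ∘ (e_λ ∘ g - 1) = e_λ^x ∘ (g ∘ g)`, i.e. the
Bell series composed with `g`, so `J_{m,λ}(x) = Σ_k S_{2,λ}(m,k) B_{k,λ}(x)` with
`S_{2,λ}(m,k) = m!/k! [t^m] g^k`. The claim is the inversion of this relation, i.e. the
orthogonality `Σ_m S_{1,λ}(n,m) S_{2,λ}(m,k) = δ_{nk}`. That follows by substituting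
`(x)_{m,λ} = Σ_k S_{2,λ}(m,k) (x)_k` into the defining expansion of `(x)_n`, and it suffices to
do so at natural `x = N`: there the substituted identity is the binomial expansion of
`e_λ^N = (1 + g)^N`, and the values `N.descFactorial k` are triangular in `(N, k)`, so the
coefficients can be compared.
-/

open PowerSeries

lemma PowerSeries.coeff_pow_eq_zero_of_lt {R : Type*} [CommSemiring R] {g : R⟦X⟧}
    (hg : constantCoeff g = 0) {k n : ℕ} (h : n < k) : coeff n (g ^ k) = 0 := by
  obtain ⟨c, hc⟩ := pow_dvd_pow_of_dvd (X_dvd_iff.mpr hg) k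
  rw [hc, coeff_X_pow_mul', if_neg (not_le.mpr h)]

lemma coeff_pscomp (f g : ℝ⟦X⟧) (n : ℕ) :
    coeff n (pscomp f g) = ∑ k ∈ range (n + 1), coeff k f * coeff n (g ^ k) :=
  coeff_mk _ _

lemma coeff_pscomp_of_le {g : ℝ⟦X⟧} (hg : constantCoeff g = 0) (f : ℝ⟦X⟧) {n N : ℕ}
    (h : n ≤ N) : coeff n (pscomp f g) = ∑ k ∈ range (N + 1), coeff k f * coeff n (g ^ k) := by
  rw [coeff_pscomp]
  refine sum_subset (range_subset_range.mpr (by omega)) fun k _ hk => ?_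
  rw [mem_range, not_lt] at hk
  rw [coeff_pow_eq_zero_of_lt hg hk, mul_zero]

lemma pscomp_eq_subst {g : ℝ⟦X⟧} (hg : constantCoeff g = 0) (f : ℝ⟦X⟧) :
    pscomp f g = f.subst g := by
  ext n
  rw [coeff_pscomp, coeff_subst' (HasSubst.of_constantCoeff_zero' hg)]
  refine (finsum_eq_sum_of_support_subset _ fun k hk => ?_).symm
  rw [coe_range, Set.mem_Iio, Nat.lt_succ_iff]
  by_contra! hnk
  exact hk (by simp only [coeff_pow_eq_zero_of_lt hg hnk, mul_zero])

lemma pscomp_assoc {g h : ℝ⟦X⟧} (hg : constantCoeff g = 0) (hh : constantCoeff h = 0)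
    (f : ℝ⟦X⟧) : pscomp (pscomp f g) h = pscomp f (pscomp g h) := by
  have hgh : constantCoeff (pscomp g h) = 0 := by
    rw [pscomp_eq_subst hh]
    exact constantCoeff_subst_eq_zero hh g hg
  rw [pscomp_eq_subst hh, pscomp_eq_subst hg, pscomp_eq_subst hgh, pscomp_eq_subst hh,
    subst_comp_subst_apply (HasSubst.of_constantCoeff_zero' hg)
      (HasSubst.of_constantCoeff_zero' hh)]

lemma pscomp_sub_one {g : ℝ⟦X⟧} (hg : constantCoeff g = 0) (f : ℝ⟦X⟧) :
    pscomp (f - 1) g = pscomp f g - 1 := by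
  simp only [pscomp_eq_subst hg, ← coe_substAlgHom (HasSubst.of_constantCoeff_zero' hg),
    map_sub, map_one]

lemma dff_succ (lam : ℝ) (n : ℕ) (x : ℝ) : dff lam (n + 1) x = dff lam n x * (x - n * lam) :=
  prod_range_succ _ _

lemma dff_add (lam a b : ℝ) (n : ℕ) :
    dff lam n (a + b) =
      ∑ ij ∈ antidiagonal n, (n.choose ij.1 : ℝ) * (dff lam ij.1 a * dff lam ij.2 b) := by
  induction n with
  | zero => simp [dff]
  | succ n ih =>
    rw [sum_antidiagonal_choose_succ_mul (fun i j => dff lam i a * dff lam j b), dff_succ, ih,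
      sum_mul, ← sum_add_distrib]
    refine sum_congr rfl fun ij hij => ?_
    rw [HasAntidiagonal.mem_antidiagonal] at hij
    rw [Nat.choose_symm_of_eq_add hij.symm, dff_succ, dff_succ, ← hij]
    push_cast
    ring

lemma dff_one_natCast (N k : ℕ) : dff 1 k N = N.descFactorial k := by
  rw [← descPochhammer_eval_eq_descFactorial, descPochhammer_eval_eq_prod_range]
  simp [dff]

@[simp]
lemma coeff_degExp (lam x : ℝ) (n : ℕ) : coeff n (degExp lam x) = dff lam n x / n.factorial :=
  coeff_mk _ _

lemma degExp_add (lam a b : ℝ) : degExp lam (a + b) = degExp lam a * degExp lam b := by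
  ext n
  rw [coeff_mul, coeff_degExp, dff_add, sum_div]
  refine sum_congr rfl fun ij hij => ?_
  rw [HasAntidiagonal.mem_antidiagonal] at hij
  subst hij
  rw [coeff_degExp, coeff_degExp, Nat.cast_add_choose]
  field_simp

lemma degExp_zero (lam : ℝ) : degExp lam 0 = 1 := by
  ext n
  rcases n with _ | n
  · simp [dff]
  · simp [dff, prod_range_succ']

lemma degExp_natCast (lam : ℝ) (N : ℕ) : degExp lam N = degExp lam 1 ^ N := by
  induction N with
  | zero => simp [degExp_zero]
  | succ N ih => rw [Nat.cast_succ, degExp_add, ih, pow_succ]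

lemma constantCoeff_degExp_one_sub_one (lam : ℝ) : constantCoeff (degExp lam 1 - 1) = 0 := by
  rw [map_sub, map_one, ← coeff_zero_eq_constantCoeff_apply, coeff_degExp]
  simp [dff]

/-- The degenerate Stirling numbers of the second kind, read off from
`(e_λ(t) - 1)^k / k! = Σ_l S_{2,λ}(l,k) t^l / l!`. -/
noncomputable def degStirling2 (lam : ℝ) (l k : ℕ) : ℝ :=
  l.factorial / k.factorial * coeff l ((degExp lam 1 - 1) ^ k)

lemma degStirling2_eq_zero_of_lt (lam : ℝ) {l k : ℕ} (h : l < k) : degStirling2 lam l k = 0 := by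
  rw [degStirling2, coeff_pow_eq_zero_of_lt (constantCoeff_degExp_one_sub_one lam) h, mul_zero]

lemma dff_natCast_eq_sum_degStirling2 (lam : ℝ) {l M : ℕ} (hlM : l ≤ M) (N : ℕ) :
    dff lam l N = ∑ k ∈ range (M + 1), degStirling2 lam l k * N.descFactorial k := by
  have hcoeff : dff lam l N / l.factorial =
      ∑ k ∈ range (N + 1), coeff l ((degExp lam 1 - 1) ^ k) * (N.choose k : ℝ) := by
    rw [← coeff_degExp, degExp_natCast, ← sub_add_cancel (degExp lam 1) 1, add_pow, map_sum]
    simp_rw [one_pow, mul_one, sub_add_cancel, ← map_natCast (C (R := ℝ)), coeff_mul_C]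
  have hextend : ∑ k ∈ range (N + 1), coeff l ((degExp lam 1 - 1) ^ k) * (N.choose k : ℝ) =
      ∑ k ∈ range (M + 1), coeff l ((degExp lam 1 - 1) ^ k) * (N.choose k : ℝ) := by
    rw [sum_subset (range_subset_range.mpr (Nat.le_add_left (N + 1) M)),
      ← sum_subset (range_subset_range.mpr (by omega : M + 1 ≤ M + (N + 1)))]
    · intro k _ hk
      rw [mem_range, not_lt] at hk
      rw [coeff_pow_eq_zero_of_lt (constantCoeff_degExp_one_sub_one lam) (by omega), zero_mul]
    · intro k _ hk
      rw [mem_range, not_lt] at hk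
      rw [Nat.choose_eq_zero_of_lt hk, Nat.cast_zero, mul_zero]
  rw [← div_mul_cancel₀ (dff lam l N) (Nat.cast_ne_zero.mpr l.factorial_ne_zero), hcoeff,
    hextend, sum_mul]
  refine sum_congr rfl fun k _ => ?_
  rw [degStirling2, Nat.descFactorial_eq_factorial_mul_choose]
  push_cast
  field_simp

lemma eq_zero_of_sum_mul_descFactorial_eq_zero {R : Type*} [CommRing R] [NoZeroDivisors R]
    [CharZero R] {n : ℕ} {c : ℕ → R}
    (h : ∀ N : ℕ, ∑ k ∈ range (n + 1), c k * N.descFactorial k = 0) : ∀ k ≤ n, c k = 0 := by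
  intro k
  induction k using Nat.strong_induction_on with
  | _ k ih =>
    intro hk
    have hsum := h k
    rw [sum_eq_single_of_mem k (mem_range.mpr (by omega)) fun j hj hjk => ?_,
      Nat.descFactorial_self] at hsum
    · exact (mul_eq_zero.mp hsum).resolve_right (Nat.cast_ne_zero.mpr k.factorial_ne_zero)
    · rcases lt_or_gt_of_ne hjk with hlt | hgt
      · rw [ih j hlt (by omega), zero_mul]
      · rw [Nat.descFactorial_of_lt hgt, Nat.cast_zero, mul_zero]

lemma sum_degStirling1_mul_degStirling2 (lam : ℝ) {S1 : ℕ → ℕ → ℝ}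
    (hS1 : ∀ (n : ℕ) (x : ℝ), dff 1 n x = ∑ l ∈ range (n + 1), S1 n l * dff lam l x)
    (n k : ℕ) : ∑ l ∈ range (n + 1), S1 n l * degStirling2 lam l k = if n = k then 1 else 0 := by
  rcases lt_or_ge n k with hnk | hkn
  · rw [if_neg hnk.ne]
    refine sum_eq_zero fun l hl => ?_
    rw [degStirling2_eq_zero_of_lt lam (by rw [mem_range] at hl; omega), mul_zero]
  have hexpand (N : ℕ) : ∑ k ∈ range (n + 1),
      (∑ l ∈ range (n + 1), S1 n l * degStirling2 lam l k) * N.descFactorial k =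
        N.descFactorial n := by
    calc _ = ∑ l ∈ range (n + 1),
          S1 n l * ∑ k ∈ range (n + 1), degStirling2 lam l k * N.descFactorial k := by
          simp_rw [sum_mul, mul_sum, mul_assoc]
          exact sum_comm
      _ = ∑ l ∈ range (n + 1), S1 n l * dff lam l N := sum_congr rfl fun l hl => by
          rw [dff_natCast_eq_sum_degStirling2 lam (mem_range_succ_iff.mp hl)]
      _ = N.descFactorial n := by rw [← hS1, dff_one_natCast]
  refine sub_eq_zero.mp (eq_zero_of_sum_mul_descFactorial_eq_zero
    (c := fun k => (∑ l ∈ range (n + 1), S1 n l * degStirling2 lam l k) - if n = k then 1 else 0)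
    (fun N => ?_) k hkn)
  simp [sub_mul, sum_sub_distrib, hexpand]

theorem bell_via_jindalrae_general (lam : ℝ)
    (S1 : ℕ → ℕ → ℝ) (B J : ℕ → ℝ → ℝ)
    (hS1 : ∀ (n : ℕ) (x : ℝ), dff 1 n x = ∑ l ∈ Finset.range (n + 1), S1 n l * dff lam l x)
    (hB : ∀ x : ℝ, pscomp (degExp lam x) (degExp lam 1 - 1) = PowerSeries.mk (fun n => B n x / n.factorial))
    (hJ : ∀ x : ℝ, pscomp (degExp lam x) (pscomp (degExp lam 1) (degExp lam 1 - 1) - 1) = PowerSeries.mk (fun n => J n x / n.factorial))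
    : ∀ (n : ℕ) (x : ℝ), B n x = ∑ m ∈ Finset.range (n + 1), J m x * S1 n m := by
  intro n x
  set g := degExp lam 1 - 1
  have hg : constantCoeff g = 0 := constantCoeff_degExp_one_sub_one lam
  have hJB : pscomp (mk fun k => B k x / k.factorial) g =
      pscomp (degExp lam x) (pscomp (degExp lam 1) g - 1) := by
    rw [← hB, ← pscomp_sub_one hg, pscomp_assoc hg hg]
  have hJ_eq_sum (m : ℕ) (hm : m ≤ n) :
      J m x = ∑ k ∈ range (n + 1), degStirling2 lam m k * B k x := by
    have hcoeff := congrArg (coeff m) (hJB.trans (hJ x))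
    simp only [coeff_pscomp_of_le hg _ hm, coeff_mk] at hcoeff
    rw [← div_mul_cancel₀ (J m x) (Nat.cast_ne_zero.mpr m.factorial_ne_zero), ← hcoeff, sum_mul]
    refine sum_congr rfl fun k _ => ?_
    rw [degStirling2]
    ring
  calc B n x = ∑ k ∈ range (n + 1), B k x * if n = k then 1 else 0 := by simp
    _ = ∑ k ∈ range (n + 1), B k x * ∑ m ∈ range (n + 1), S1 n m * degStirling2 lam m k := by
      simp_rw [sum_degStirling1_mul_degStirling2 lam hS1]
    _ = ∑ m ∈ range (n + 1), J m x * S1 n m := by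
      simp_rw [mul_sum]
      rw [sum_comm]
      refine sum_congr rfl fun m hm => ?_
      rw [hJ_eq_sum m (mem_range_succ_iff.mp hm), sum_mul]
      exact sum_congr rfl fun k _ => by ring

theorem bell_via_jindalrae (lam : ℝ) (hlam : lam ≠ 0)
    (S1 : ℕ → ℕ → ℝ) (B J : ℕ → ℝ → ℝ)
    (hS1 : ∀ (n : ℕ) (x : ℝ), dff 1 n x = ∑ l ∈ Finset.range (n + 1), S1 n l * dff lam l x)
    (hB : ∀ x : ℝ, pscomp (degExp lam x) (degExp lam 1 - 1) = PowerSeries.mk (fun n => B n x / n.factorial))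
    (hJ : ∀ x : ℝ, pscomp (degExp lam x) (pscomp (degExp lam 1) (degExp lam 1 - 1) - 1) = PowerSeries.mk (fun n => J n x / n.factorial))
    : ∀ (n : ℕ) (x : ℝ), B n x = ∑ m ∈ Finset.range (n + 1), J m x * S1 n m :=
  bell_via_jindalrae_general lam S1 B J hS1 hB hJ
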